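/- For every integer $n\ge 2$, the number of triangles (cliques of order $3$) in the unitary Cayley graph $G_{\mathbb{Z}/n\mathbb{Z}}$ equals $\frac{1}{6}n\varphi(n)S_2(n)$; equivalently, six times the number of triangles equals $n\,\varphi(n)\,S_2(n)$. -/

import Mathlib

/-!
Count labelled triangles, i.e. maps `f : Fin 3 → ZMod n` with all differences `f i - f j` units:
each triangle carries `3! = 6` labellings. A labelled triangle is `(a, a + u, a + u (v + 1))` for
unique `a` and units `u`, `v`, `v + 1`, since its three differences are `u`, `u (v + 1)` and `u v`.
This gives `n · φ(n) · #{v | v, v + 1 units}`, and the last factor is `S₂(n)` because `1, …, n`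
represent `ZMod n`.
-/

/-- The unitary Cayley graph of `ℤ/nℤ`: two distinct vertices are adjacent
iff their difference is a unit of `ℤ/nℤ`. -/
def unitaryCayley (n : ℕ) : SimpleGraph (ZMod n) where
  Adj u v := u ≠ v ∧ IsUnit (u - v)
  symm := ⟨fun _ _ h => ⟨h.1.symm, by rw [← neg_sub]; exact h.2.neg⟩⟩
  loopless := ⟨fun _ h => h.1 rfl⟩

/-- The `2`nd Schemmel totient function:
`S_2(n) = #{k : 1 ≤ k ≤ n, gcd(k,n) = gcd(k+1,n) = 1}`, stated here for general `r`. -/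
def schemmel (r n : ℕ) : ℕ :=
  ((Finset.Icc 1 n).filter (fun k => ∀ i < r, Nat.gcd (k + i) n = 1)).card

open Finset
open scoped Nat

theorem Finset.injective_of_card_image_univ {ι α : Type*} [Fintype ι] [DecidableEq α]
    {f : ι → α} (h : #(univ.image f) = Fintype.card ι) : f.Injective := by
  rw [← Set.injOn_univ, ← coe_univ, ← card_image_iff, h, Finset.card_univ]

theorem Finset.card_filter_image_univ_eq {ι α : Type*} [Fintype ι] [DecidableEq ι] [Fintype α]
    [DecidableEq α] (s : Finset α) (hs : Fintype.card ι = #s) :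
    #{f : ι → α | univ.image f = s} = (#s)! := by
  let incl : (ι ↪ s) ↪ (ι → α) := ⟨fun g => Subtype.val ∘ g,
    fun g h hgh => Function.Embedding.ext fun i => Subtype.ext (congrFun hgh i)⟩
  calc #{f : ι → α | univ.image f = s} = #(univ.map incl) := by
        congr 1
        ext f
        simp only [mem_filter, mem_univ, true_and, mem_map]
        constructor
        · intro hf
          have hinj : f.Injective := injective_of_card_image_univ (hf ▸ hs.symm)
          exact ⟨⟨fun i => ⟨f i, hf ▸ mem_image_of_mem f (mem_univ i)⟩,
            fun i j hij => hinj (congrArg Subtype.val hij)⟩, rfl⟩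
        · rintro ⟨g, -, rfl⟩
          refine eq_of_subset_of_card_le (fun _ hx => ?_) ?_
          · obtain ⟨i, -, rfl⟩ := mem_image.1 hx
            exact (g i).2
          · change #s ≤ #(univ.image (Subtype.val ∘ g))
            rw [card_image_of_injective _ (Subtype.val_injective.comp g.injective),
              Finset.card_univ, hs]
    _ = (#s)! := by
        rw [card_map, Finset.card_univ, Fintype.card_embedding_eq, hs, Fintype.card_coe,
          Nat.descFactorial_self]

namespace SimpleGraph

variable {V : Type*} (G : SimpleGraph V)

theorem pairwise_adj_iff {ι : Type*} {f : ι → V} :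
    Pairwise (fun i j => G.Adj (f i) (f j)) ↔ f.Injective ∧ G.IsClique (Set.range f) := by
  refine ⟨fun h => ⟨fun i j hij => ?_, ?_⟩, fun ⟨hinj, hclique⟩ i j hij => ?_⟩
  · by_contra hne
    exact (h hne).ne hij
  · rintro _ ⟨i, rfl⟩ _ ⟨j, rfl⟩ hne
    exact h (ne_of_apply_ne f hne)
  · exact hclique (Set.mem_range_self i) (Set.mem_range_self j) (hinj.ne hij)

open Classical in
theorem card_pairwise_adj [Fintype V] [DecidableEq V] [DecidableRel G.Adj] (k : ℕ) :
    #{f : Fin k → V | Pairwise (fun i j => G.Adj (f i) (f j))} = k ! * #(G.cliqueFinset k) := by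
  have hmaps : ∀ f ∈ ({f | Pairwise (fun i j => G.Adj (f i) (f j))} : Finset (Fin k → V)),
      univ.image f ∈ G.cliqueFinset k := by
    intro f hf
    obtain ⟨hinj, hclique⟩ := G.pairwise_adj_iff.1 (mem_filter.1 hf).2
    rw [mem_cliqueFinset_iff, isNClique_iff, coe_image, coe_univ, Set.image_univ,
      card_image_of_injective _ hinj, Finset.card_univ, Fintype.card_fin]
    exact ⟨hclique, rfl⟩
  rw [card_eq_sum_card_fiberwise hmaps, sum_const_nat, mul_comm]
  intro s hs
  have hs := mem_cliqueFinset_iff.1 hs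
  have hfiber : ∀ f : Fin k → V, univ.image f = s →
      Pairwise (fun i j => G.Adj (f i) (f j)) := by
    intro f hf
    refine G.pairwise_adj_iff.2
      ⟨injective_of_card_image_univ (by rw [hf, hs.card_eq, Fintype.card_fin]), ?_⟩
    rw [← Set.image_univ, ← coe_univ, ← coe_image, hf]
    exact hs.isClique
  rw [filter_filter, filter_congr fun f _ => and_iff_right_of_imp (hfiber f),
    card_filter_image_univ_eq (ι := Fin k) s (by rw [Fintype.card_fin, hs.card_eq]), hs.card_eq]

theorem ncard_setOf_isNClique [Fintype V] [DecidableEq V] [DecidableRel G.Adj] (k : ℕ) :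
    {s : Finset V | G.IsNClique k s}.ncard = #(G.cliqueFinset k) := by
  rw [← Set.ncard_coe_finset, coe_cliqueFinset]
  rfl

end SimpleGraph

theorem card_filter_isUnit (R : Type*) [Monoid R] [Fintype R] [DecidableEq R]
    [DecidablePred (IsUnit : R → Prop)] : #{u : R | IsUnit u} = Fintype.card Rˣ := by
  rw [← Finset.card_univ, ← card_map ⟨Units.val, Units.val_injective⟩]
  congr 1
  ext u
  simp [IsUnit, eq_comm]

theorem pairwise_isUnit_sub_fin_three {R : Type*} [Ring R] {f : Fin 3 → R} :
    Pairwise (fun i j => IsUnit (f i - f j)) ↔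
      IsUnit (f 1 - f 0) ∧ IsUnit (f 2 - f 0) ∧ IsUnit (f 2 - f 1) := by
  have hsymm : ∀ i j, IsUnit (f i - f j) ↔ IsUnit (f j - f i) := fun i j => by
    rw [← neg_sub, IsUnit.neg_iff]
  refine ⟨fun h => ⟨h (by decide), h (by decide), h (by decide)⟩, ?_⟩
  rintro ⟨h10, h20, h21⟩ i j hij
  fin_cases i <;> fin_cases j <;>
    first | exact absurd rfl hij | assumption | exact (hsymm _ _).1 ‹_›

open Classical in
theorem card_pairwise_isUnit_sub_fin_three (R : Type*) [Ring R] [Fintype R] [DecidableEq R] :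
    #{f : Fin 3 → R | Pairwise (fun i j => IsUnit (f i - f j))} =
      Fintype.card R * #{u : R | IsUnit u} * #{v : R | IsUnit v ∧ IsUnit (v + 1)} := by
  rw [mul_assoc, ← Finset.card_univ, ← card_product, ← card_product]
  symm
  refine card_nbij' (fun t => ![t.1, t.1 + t.2.1, t.1 + t.2.1 * (t.2.2 + 1)])
    (fun f => (f 0, f 1 - f 0, Ring.inverse (f 1 - f 0) * (f 2 - f 1))) ?_ ?_ ?_ ?_
  · rintro ⟨a, u, v⟩ h
    simp only [mem_coe, mem_product, mem_filter, mem_univ, true_and] at h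
    obtain ⟨hu, hv, hv1⟩ := h
    simp only [mem_coe, mem_filter, mem_univ, true_and, pairwise_isUnit_sub_fin_three,
      Matrix.cons_val_zero, Matrix.cons_val_one, Matrix.cons_val_two, Matrix.head_cons,
      Matrix.tail_cons, add_sub_cancel_left, add_sub_add_left_eq_sub]
    refine ⟨hu, hu.mul hv1, ?_⟩
    rw [mul_add_one, add_sub_cancel_right]
    exact hu.mul hv
  · intro f hf
    simp only [mem_coe, mem_filter, mem_univ, true_and, pairwise_isUnit_sub_fin_three] at hf
    obtain ⟨h10, h20, h21⟩ := hf
    simp only [mem_coe, mem_product, mem_filter, mem_univ, true_and]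
    have hw1 : Ring.inverse (f 1 - f 0) * (f 2 - f 1) + 1 =
        Ring.inverse (f 1 - f 0) * (f 2 - f 0) := by
      rw [← Ring.inverse_mul_cancel _ h10, ← mul_add]
      congr 1
      abel
    rw [hw1]
    exact ⟨h10, h10.ringInverse.mul h21, h10.ringInverse.mul h20⟩
  · rintro ⟨a, u, v⟩ h
    simp only [mem_coe, mem_product, mem_filter, mem_univ, true_and] at h
    simp only [Matrix.cons_val_zero, Matrix.cons_val_one, Matrix.cons_val_two, Matrix.head_cons,
      Matrix.tail_cons, add_sub_cancel_left, add_sub_add_left_eq_sub, mul_add_one,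
      add_sub_cancel_right, Ring.inverse_mul_cancel_left _ _ h.1]
  · intro f hf
    simp only [mem_coe, mem_filter, mem_univ, true_and, pairwise_isUnit_sub_fin_three] at hf
    ext i
    fin_cases i
    · rfl
    · simp
    · simp [mul_add_one, Ring.mul_inverse_cancel_left _ _ hf.1]

theorem unitaryCayley_adj_iff {n : ℕ} [Nontrivial (ZMod n)] {u v : ZMod n} :
    (unitaryCayley n).Adj u v ↔ IsUnit (u - v) :=
  ⟨And.right, fun h => ⟨by rintro rfl; exact not_isUnit_zero (sub_self u ▸ h), h⟩⟩

theorem schemmel_eq_card_filter_isUnit (r n : ℕ) [NeZero n] :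
    schemmel r n = #{v : ZMod n | ∀ i < r, IsUnit (v + i)} := by
  refine card_nbij' (fun k => (k : ZMod n)) (fun v => (v - 1).val + 1) ?_ ?_ ?_ ?_
  · intro k hk
    simp only [coe_filter, mem_Icc, mem_univ, true_and, Set.mem_ofPred_eq] at hk ⊢
    intro i hi
    exact_mod_cast (ZMod.isUnit_iff_coprime (k + i) n).2 (hk.2 i hi)
  · intro v hv
    simp only [coe_filter, mem_Icc, mem_univ, true_and, Set.mem_ofPred_eq] at hv ⊢
    refine ⟨⟨by omega, (v - 1).val_lt⟩, fun i hi => ZMod.isUnit_iff_coprime _ n |>.1 ?_⟩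
    push_cast
    rw [ZMod.natCast_zmod_val, sub_add_cancel]
    exact hv i hi
  · intro k hk
    simp only [coe_filter, mem_Icc, Set.mem_ofPred_eq] at hk
    have hk1 : (k : ZMod n) - 1 = ((k - 1 : ℕ) : ZMod n) := by
      rw [Nat.cast_sub hk.1.1, Nat.cast_one]
    simp only [hk1, ZMod.val_cast_of_lt (show k - 1 < n by omega)]
    omega
  · intro v _
    simp only [Nat.cast_add, Nat.cast_one, ZMod.natCast_zmod_val, sub_add_cancel]

/-- The number of triangles (cliques of order 3) in `G_{ℤ/nℤ}` equals
`n·φ(n)·S₂(n)/6`; equivalently, six times the number of triangles is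
`n·φ(n)·S₂(n)`. -/
theorem triangles_of_unitaryCayley (n : ℕ) (hn : 2 ≤ n) :
    6 * {s : Finset (ZMod n) | (unitaryCayley n).IsNClique 3 s}.ncard
      = n * Nat.totient n * schemmel 2 n := by
  classical
  have : NeZero n := ⟨by omega⟩
  have : Fact (1 < n) := ⟨hn⟩
  have hunits : #{u : ZMod n | IsUnit u} = n.totient := by
    rw [card_filter_isUnit, ZMod.card_units_eq_totient]
  have hschemmel : #{v : ZMod n | IsUnit v ∧ IsUnit (v + 1)} = schemmel 2 n := by
    rw [schemmel_eq_card_filter_isUnit]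
    congr 1
    ext v
    simp only [mem_filter, mem_univ, true_and]
    refine ⟨fun ⟨h0, h1⟩ i hi => ?_, fun h => ⟨by simpa using h 0, by simpa using h 1⟩⟩
    interval_cases i
    · simpa using h0
    · simpa using h1
  rw [SimpleGraph.ncard_setOf_isNClique, ← show (3 : ℕ)! = 6 from rfl,
    ← SimpleGraph.card_pairwise_adj]
  simp_rw [unitaryCayley_adj_iff]
  rw [card_pairwise_isUnit_sub_fin_three, ZMod.card, hunits, hschemmel]
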